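/- arXiv:1606.00051 — 5 statements merged into one kernel-verified Lean document; each statement's English description precedes it below -/
import Mathlib

section
/- Let N be a positive integer and let f : ZMod N → ℂ be nonzero. Then |supp f| · |supp 𝓕 f| ≥ N. (This is the Donoho–Stark uncertainty principle, Proposition 3.2 of the paper, specialized to the unimodular Kac algebra L^∞(ℤ/Nℤ).) -/
open Complex Finset

/-- The unitary discrete Fourier transform on `ZMod N`. -/
noncomputable def dft (N : ℕ) [NeZero N] (f : ZMod N → ℂ) : ZMod N → ℂ :=
  fun k => (((N : ℝ) ^ (-(1/2 : ℝ)) : ℝ) : ℂ) *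
    ∑ x : ZMod N, f x *
      Complex.exp (-2 * Real.pi * Complex.I * (k.val : ℂ) * (x.val : ℂ) / (N : ℂ))

/-!
Every coefficient of `𝓕 Φ` is bounded by `∑ j, ‖Φ j‖ ≤ |supp Φ| · ‖Φ‖`, where `‖·‖` on functions
is the sup norm. Applying this to `Φ` and to `𝓕 Φ`, and using `𝓕 (𝓕 Φ) = N • Φ (-·)`, gives
`N ‖Φ‖ ≤ |supp Φ| · |supp 𝓕 Φ| · ‖Φ‖`; divide by `‖Φ‖ > 0`. The unitary `dft` is a nonzero
multiple of `𝓕`, so it has the same support.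
-/

open ZMod Function

section SupportNorm

variable {ι E : Type*} [Fintype ι] [NormedAddCommGroup E]

lemma sum_norm_le_ncard_support_mul_norm (f : ι → E) :
    ∑ i, ‖f i‖ ≤ (support f).ncard * ‖f‖ := by
  classical
  calc ∑ i, ‖f i‖ = ∑ i ∈ (support f).toFinset, ‖f i‖ :=
        (sum_subset (subset_univ _) fun i _ hi => by simpa using hi).symm
    _ ≤ #(support f).toFinset • ‖f‖ := sum_le_card_nsmul _ _ _ fun i _ => norm_le_pi_norm f i
    _ = (support f).ncard * ‖f‖ := by rw [nsmul_eq_mul, Set.ncard_eq_toFinset_card']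

lemma pi_norm_comp_equiv (f : ι → E) (e : ι ≃ ι) : ‖f ∘ e‖ = ‖f‖ :=
  le_antisymm (pi_norm_comp_le f e) <| by
    simpa [Function.comp_def] using pi_norm_comp_le (f ∘ e) e.symm

end SupportNorm

namespace ZMod

variable {N : ℕ} [NeZero N] {E : Type*} [NormedAddCommGroup E] [NormedSpace ℂ E]

lemma norm_stdAddChar (j : ZMod N) : ‖stdAddChar j‖ = 1 := Circle.norm_coe _

lemma norm_dft_apply_le_sum_norm (Φ : ZMod N → E) (k : ZMod N) :
    ‖𝓕 Φ k‖ ≤ ∑ j, ‖Φ j‖ :=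
  (norm_sum_le _ _).trans_eq <| sum_congr rfl fun j _ => by rw [norm_smul, norm_stdAddChar, one_mul]

lemma norm_dft_le_ncard_support_mul_norm (Φ : ZMod N → E) :
    ‖𝓕 Φ‖ ≤ (support Φ).ncard * ‖Φ‖ :=
  (pi_norm_le_iff_of_nonneg (by positivity)).2 fun k =>
    (norm_dft_apply_le_sum_norm Φ k).trans (sum_norm_le_ncard_support_mul_norm Φ)

lemma norm_dft_dft (Φ : ZMod N → E) : ‖𝓕 (𝓕 Φ)‖ = N * ‖Φ‖ := by
  rw [dft_dft, show (fun j => (N : ℂ) • Φ (-j)) = (N : ℂ) • (Φ ∘ Equiv.neg _) from rfl, norm_smul,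
    pi_norm_comp_equiv, Complex.norm_natCast]

theorem le_ncard_support_mul_ncard_support_dft {Φ : ZMod N → E} (hΦ : Φ ≠ 0) :
    N ≤ (support Φ).ncard * (support (𝓕 Φ)).ncard := by
  have hnorm : 0 < ‖Φ‖ := norm_pos_iff.2 hΦ
  have key : (N : ℝ) * ‖Φ‖ ≤ ((support Φ).ncard * (support (𝓕 Φ)).ncard) * ‖Φ‖ :=
    calc (N : ℝ) * ‖Φ‖ = ‖𝓕 (𝓕 Φ)‖ := (norm_dft_dft Φ).symm
      _ ≤ (support (𝓕 Φ)).ncard * ‖𝓕 Φ‖ := norm_dft_le_ncard_support_mul_norm _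
      _ ≤ (support (𝓕 Φ)).ncard * ((support Φ).ncard * ‖Φ‖) := by
          gcongr; exact norm_dft_le_ncard_support_mul_norm Φ
      _ = ((support Φ).ncard * (support (𝓕 Φ)).ncard) * ‖Φ‖ := by ring
  exact_mod_cast le_of_mul_le_mul_right key hnorm

lemma stdAddChar_neg_mul (j k : ZMod N) :
    stdAddChar (-(j * k)) = Complex.exp (-2 * Real.pi * I * k.val * j.val / N) := by
  have : -(j * k) = ((-(k.val * j.val : ℤ) : ℤ) : ZMod N) := by
    push_cast
    rw [natCast_zmod_val, natCast_zmod_val]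
    ring
  rw [this, stdAddChar_coe]
  push_cast
  congr 1
  ring

end ZMod

lemma dft_eq_smul (N : ℕ) [NeZero N] (f : ZMod N → ℂ) :
    dft N f = (((N : ℝ) ^ (-(1/2 : ℝ)) : ℝ) : ℂ) • 𝓕 f := by
  ext k
  simp only [_root_.dft, Pi.smul_apply, smul_eq_mul, dft_apply, stdAddChar_neg_mul, mul_comm (f _)]

lemma support_dft (N : ℕ) [NeZero N] (f : ZMod N → ℂ) : support (dft N f) = support (𝓕 f) := by
  rw [dft_eq_smul]
  refine support_const_smul_of_ne_zero _ _ ?_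
  exact_mod_cast (Real.rpow_pos_of_pos (Nat.cast_pos.2 (NeZero.pos N)) _).ne'

/-- Donoho–Stark uncertainty principle for ZMod N:
if f is nonzero then the product of the support sizes of f and of its
Fourier transform is at least N. -/
theorem donoho_stark (N : ℕ) [NeZero N] (f : ZMod N → ℂ) (hf : f ≠ 0) :
    (Function.support f).ncard * (Function.support (dft N f)).ncard ≥ N := by
  rw [support_dft]
  exact le_ncard_support_mul_ncard_support_dft hf
end

section
/- Let N be a positive integer, H an additive subgroup of ZMod N, and a, b : ZMod N. Define f : ZMod N → ℂ by f(x) = exp(2πi·b̄·x̄/N) if x ∈ a + H and f(x) = 0 otherwise. Then |supp f| · |supp 𝓕 f| = N; in particular f is a minimizer of the Donoho–Stark uncertainty principle. (This is Proposition 3.6 of the paper — shifts of biprojections are extremal bi-partial isometries — specialized to L^∞(ℤ/Nℤ), where biprojections are indicator functions of subgroups and their shifts are modulated translates.) -/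
open Complex Finset

/-- A modulated translate of the indicator function of a subgroup of ZMod N
is a minimizer of the Donoho–Stark uncertainty principle. -/
theorem shift_of_biprojection_minimizer (N : ℕ) [NeZero N] (H : AddSubgroup (ZMod N))
    (a b : ZMod N) (f : ZMod N → ℂ)
    (hf : ∀ x : ZMod N,
      (x - a ∈ H →
        f x = Complex.exp (2 * Real.pi * Complex.I * (b.val : ℂ) * (x.val : ℂ) / (N : ℂ))) ∧
      (x - a ∉ H → f x = 0)) :
    (Function.support f).ncard * (Function.support (dft N f)).ncard = N := by
  classical
  set ψ : AddChar (ZMod N) ℂ := ZMod.stdAddChar with hψdef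
  -- basic facts about ψ
  have hψmul : ∀ (u v : ZMod N),
      ψ (u * v) = Complex.exp (2 * Real.pi * Complex.I * (u.val : ℂ) * (v.val : ℂ) / (N : ℂ)) := by
    intro u v
    have h1 : u * v = (((u.val * v.val : ℕ) : ℤ) : ZMod N) := by
      push_cast
      simp [ZMod.natCast_val, ZMod.cast_id]
    rw [h1, hψdef, ZMod.stdAddChar_coe]
    norm_num
    congr 1
    push_cast
    ring
  have hψne : ∀ m : ZMod N, ψ m ≠ 0 := by
    intro m h
    have h1 : ψ m * ψ (-m) = 1 := by
      rw [← AddChar.map_add_eq_mul, add_neg_cancel, AddChar.map_zero_eq_one]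
    rw [h, zero_mul] at h1
    exact zero_ne_one h1
  have hψ1 : ∀ m : ZMod N, ψ m = 1 → m = 0 := by
    intro m hm
    have : ψ m = ψ 0 := by rw [hm, AddChar.map_zero_eq_one]
    exact ZMod.injective_stdAddChar this
  -- the coset sum
  set S : ZMod N → ℂ := fun c => ∑ h : H, ψ (c * (h : ZMod N)) with hSdef
  set A : Finset (ZMod N) := univ.filter (fun c => ∀ h ∈ H, c * h = 0) with hAdef
  have hS : ∀ c : ZMod N, S c = if c ∈ A then (Fintype.card H : ℂ) else 0 := by
    intro c
    by_cases hc : c ∈ A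
    · simp only [hc, if_true]
      rw [hSdef]
      have : ∀ h : H, ψ (c * (h : ZMod N)) = 1 := by
        intro h
        rw [hAdef] at hc
        rw [mem_filter] at hc
        rw [hc.2 h h.2, AddChar.map_zero_eq_one]
      simp [this, Finset.card_univ]
    · simp only [hc, if_false]
      rw [hAdef, mem_filter] at hc
      push_neg at hc
      obtain ⟨h0, hh0, hne⟩ := hc (mem_univ c)
      have hne1 : ψ (c * h0) ≠ 1 := fun h => hne (hψ1 _ h)
      have key : S c = ψ (c * h0) * S c := by
        rw [hSdef, Finset.mul_sum]
        refine Fintype.sum_equiv (Equiv.addLeft (-(⟨h0, hh0⟩ : H))) _ _ (fun h => ?_)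
        rw [← AddChar.map_add_eq_mul]
        congr 1
        simp only [Equiv.coe_addLeft, AddSubgroup.coe_add, AddSubgroup.coe_neg]
        ring
      have : (ψ (c * h0) - 1) * S c = 0 := by
        rw [sub_mul, one_mul, ← key, sub_self]
      rcases mul_eq_zero.mp this with h | h
      · exact absurd (by linear_combination h : ψ (c * h0) = 1) hne1
      · exact h
  -- counting: |A| * |H| = N
  have hcount : A.card * Fintype.card H = N := by
    have h2 : ∑ c : ZMod N, S c = (N : ℂ) := by
      rw [hSdef]
      rw [Finset.sum_comm]
      have hinner : ∀ h : H, (∑ c : ZMod N, ψ (c * (h : ZMod N)))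
          = if (h : ZMod N) = 0 then (N : ℂ) else 0 := by
        intro h
        split_ifs with h0
        · simp only [h0, mul_zero, AddChar.map_zero_eq_one, Finset.sum_const,
            Finset.card_univ, ZMod.card, nsmul_eq_mul, mul_one]
        · have hmc : ∀ c : ZMod N, c * (h : ZMod N) = (h : ZMod N) * c := fun c => mul_comm _ _
          simp only [hmc, ← AddChar.mulShift_apply]
          exact AddChar.sum_eq_zero_of_ne_one (ZMod.isPrimitive_stdAddChar N h0)
      rw [Fintype.sum_congr _ _ hinner]
      simp [ZeroMemClass.coe_eq_zero]
    have h1 : ∑ c : ZMod N, S c = (A.card : ℂ) * (Fintype.card H : ℂ) := by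
      simp only [hS]
      rw [Finset.sum_ite_mem, Finset.univ_inter, Finset.sum_const, nsmul_eq_mul]
    have := h1.symm.trans h2
    exact_mod_cast this
  -- f as indicator times character
  have hfx : ∀ x : ZMod N, f x = if x - a ∈ H then ψ (b * x) else 0 := by
    intro x
    by_cases hx : x - a ∈ H
    · rw [if_pos hx, (hf x).1 hx, hψmul]
    · rw [if_neg hx, (hf x).2 hx]
  -- the DFT formula
  have hdft : ∀ k : ZMod N, dft N f k
      = (((N : ℝ) ^ (-(1/2 : ℝ)) : ℝ) : ℂ) * (ψ ((b - k) * a) * S (b - k)) := by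
    intro k
    rw [dft]
    congr 1
    have hterm : ∀ x : ZMod N,
        Complex.exp (-2 * Real.pi * Complex.I * (k.val : ℂ) * (x.val : ℂ) / (N : ℂ))
        = ψ (-(k * x)) := by
      intro x
      have h1 : -(k * x) = (((-(k.val * x.val : ℤ)) : ℤ) : ZMod N) := by
        push_cast
        simp [ZMod.natCast_val, ZMod.cast_id]
      rw [h1, hψdef, ZMod.stdAddChar_coe]
      congr 1
      push_cast
      ring
    calc ∑ x : ZMod N, f x *
          Complex.exp (-2 * Real.pi * Complex.I * (k.val : ℂ) * (x.val : ℂ) / (N : ℂ))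
        = ∑ x : ZMod N, (if x - a ∈ H then ψ ((b - k) * x) else 0) := by
          refine Finset.sum_congr rfl (fun x _ => ?_)
          rw [hfx x, hterm x]
          split_ifs with hx
          · rw [← AddChar.map_add_eq_mul]
            congr 1
            ring
          · rw [zero_mul]
      _ = ∑ h : H, ψ ((b - k) * (a + (h : ZMod N))) := by
          rw [← Finset.sum_filter]
          refine (Finset.sum_bij (fun (h : H) _ => a + (h : ZMod N)) ?_ ?_ ?_ ?_).symm
          · intro h _
            simp only [mem_filter, mem_univ, true_and, add_sub_cancel_left]
            exact h.2
          · intro h1 _ h2 _ heq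
            exact Subtype.ext (by simpa using heq)
          · intro x hx
            rw [mem_filter] at hx
            exact ⟨⟨x - a, hx.2⟩, mem_univ _, by simp⟩
          · intro h _
            rfl
      _ = ψ ((b - k) * a) * S (b - k) := by
          rw [hSdef, Finset.mul_sum]
          refine Fintype.sum_congr _ _ (fun h => ?_)
          rw [← AddChar.map_add_eq_mul, mul_add]
  -- support of f
  have hc0 : (((N : ℝ) ^ (-(1/2 : ℝ)) : ℝ) : ℂ) ≠ 0 := by
    rw [Complex.ofReal_ne_zero]
    refine (Real.rpow_pos_of_pos ?_ _).ne'
    exact_mod_cast Nat.pos_of_ne_zero (NeZero.ne N)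
  have hsuppf : Function.support f = ↑(univ.filter (fun x : ZMod N => x - a ∈ H)) := by
    ext x
    simp only [Function.mem_support, Finset.coe_filter, Set.mem_setOf_eq, mem_univ, true_and]
    rw [hfx x]
    split_ifs with hx
    · simp [hx, hψne]
    · simp [hx]
  have hsuppd : Function.support (dft N f)
      = ↑(univ.filter (fun k : ZMod N => b - k ∈ A)) := by
    ext k
    simp only [Function.mem_support, Finset.coe_filter, Set.mem_setOf_eq, mem_univ, true_and]
    rw [hdft k, hS (b - k)]
    split_ifs with hk
    · simp only [hk, iff_true]
      exact mul_ne_zero hc0 (mul_ne_zero (hψne _)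
        (Nat.cast_ne_zero.mpr Fintype.card_ne_zero))
    · simp [hk]
  rw [hsuppf, hsuppd, Set.ncard_coe_finset, Set.ncard_coe_finset]
  have hcard1 : (univ.filter (fun x : ZMod N => x - a ∈ H)).card = Fintype.card H := by
    rw [← Finset.card_univ]
    refine Finset.card_bij (fun x hx => (⟨x - a, (mem_filter.mp hx).2⟩ : H)) ?_ ?_ ?_
    · intro x _; exact mem_univ _
    · intro x1 hx1 x2 hx2 heq
      have := Subtype.ext_iff.mp heq
      simpa using sub_left_injective this
    · intro h _
      exact ⟨a + (h : ZMod N), mem_filter.mpr ⟨mem_univ _, by simpa using h.2⟩, by simp⟩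
  have hcard2 : (univ.filter (fun k : ZMod N => b - k ∈ A)).card = A.card := by
    refine Finset.card_bij (fun k hk => b - k) ?_ ?_ ?_
    · intro k hk; exact (mem_filter.mp hk).2
    · intro k1 _ k2 _ heq
      exact sub_right_injective heq
    · intro c hc
      exact ⟨b - c, mem_filter.mpr ⟨mem_univ _, by simpa using hc⟩, by ring⟩
  rw [hcard1, hcard2, mul_comm]
  exact hcount
end

section
/- Let N be a positive integer and let w : ZMod N → ℂ be a nonzero function such that |w(x)| ∈ {0, 1} for all x (w is a partial isometry) and ‖w‖_∞ = N^(-1/2) · ‖𝓕 w‖₁ (𝓕 w is extremal). Then w is an extremal bi-partial isometry: |𝓕 w| is constant on supp 𝓕 w and ‖𝓕 w‖_∞ = N^(-1/2) · ‖w‖₁. (This is Proposition 3.9 of the paper, specialized to L^∞(ℤ/Nℤ).) -/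
/-!
Parseval and `|w|² = |w|` give `‖𝓕 w‖₂² = ‖w‖₁`, while the triangle inequality gives
`‖𝓕 w‖_∞ ≤ N^(-1/2) ‖w‖₁`. Hence
`‖𝓕 w‖₂² ≤ ‖𝓕 w‖_∞ ‖𝓕 w‖₁ ≤ N^(-1/2) ‖w‖₁ ‖𝓕 w‖₁ = ‖w‖₁ ‖w‖_∞ ≤ ‖w‖₁ = ‖𝓕 w‖₂²`,
so every inequality is an equality. Equality in the first one forces `|𝓕 w|` to take only the
values `0` and `‖𝓕 w‖_∞`; multiplied by `N^(-1/2)`, it reads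
`N^(-1/2) ‖w‖₁ = ‖𝓕 w‖_∞ ‖w‖_∞ ≤ ‖𝓕 w‖_∞`, the reverse of the triangle bound.
-/

open Complex Finset

/-- The `ℓ¹` norm `‖f‖₁ = ∑ x, |f x|`. -/
noncomputable def l1norm (N : ℕ) [NeZero N] (f : ZMod N → ℂ) : ℝ :=
  ∑ x : ZMod N, ‖f x‖

/-- The `ℓ^∞` norm `‖f‖_∞ = max_x |f x|`. -/
noncomputable def linftyNorm (N : ℕ) [NeZero N] (f : ZMod N → ℂ) : ℝ :=
  ⨆ x : ZMod N, ‖f x‖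

namespace Finset

variable {ι : Type*} {s : Finset ι} {a : ι → ℝ} {M : ℝ}

lemma sum_sq_le_mul_sum_of_le (ha₀ : ∀ i ∈ s, 0 ≤ a i) (haM : ∀ i ∈ s, a i ≤ M) :
    ∑ i ∈ s, a i ^ 2 ≤ M * ∑ i ∈ s, a i := by
  rw [mul_sum]
  exact sum_le_sum fun i hi => by
    rw [sq]; exact mul_le_mul_of_nonneg_right (haM i hi) (ha₀ i hi)

lemma eq_of_sum_sq_eq_mul_sum (ha₀ : ∀ i ∈ s, 0 ≤ a i) (haM : ∀ i ∈ s, a i ≤ M)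
    (h : ∑ i ∈ s, a i ^ 2 = M * ∑ i ∈ s, a i) {i : ι} (hi : i ∈ s) (hai : a i ≠ 0) :
    a i = M := by
  have hsum : ∑ j ∈ s, a j * (M - a j) = 0 := by
    rw [← sub_eq_zero.2 h.symm, mul_sum, ← sum_sub_distrib]
    exact sum_congr rfl fun j _ => by ring
  have hterm := (sum_eq_zero_iff_of_nonneg fun j hj =>
    mul_nonneg (ha₀ j hj) (sub_nonneg.2 (haM j hj))).1 hsum i hi
  linarith [(mul_eq_zero.1 hterm).resolve_left hai]

end Finset

namespace ZMod

open scoped ZMod ComplexConjugate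

variable {N : ℕ} [NeZero N]

lemma sum_dft_mul (f g : ZMod N → ℂ) : ∑ k, 𝓕 f k * g k = ∑ j, f j * 𝓕 g j := by
  simp only [dft_apply, smul_eq_mul, sum_mul, mul_sum]
  rw [sum_comm]
  exact sum_congr rfl fun j _ => sum_congr rfl fun k _ => by rw [mul_comm j k]; ring

lemma conj_dft_apply (f : ZMod N → ℂ) (k : ZMod N) :
    conj (𝓕 f k) = 𝓕 (fun j => conj (f j)) (-k) := by
  simp only [dft_apply, smul_eq_mul, map_sum, map_mul, ← AddChar.map_neg_eq_conj, mul_neg,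
    neg_neg]

lemma sum_norm_dft_sq (f : ZMod N → ℂ) : ∑ k, ‖𝓕 f k‖ ^ 2 = N * ∑ j, ‖f j‖ ^ 2 := by
  have h : ∑ k, 𝓕 f k * conj (𝓕 f k) = N * ∑ j, f j * conj (f j) := by
    simp only [conj_dft_apply, ← dft_comp_neg, sum_dft_mul, dft_dft, neg_neg, smul_eq_mul,
      mul_sum]
    exact sum_congr rfl fun j _ => by ring
  simp only [mul_conj'] at h
  exact_mod_cast h

lemma norm_dft_apply_le (f : ZMod N → ℂ) (k : ZMod N) : ‖𝓕 f k‖ ≤ ∑ j, ‖f j‖ := by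
  rw [dft_apply]
  refine (norm_sum_le _ _).trans_eq (sum_congr rfl fun j _ => ?_)
  rw [norm_smul, AddChar.norm_apply, one_mul]

lemma cexp_eq_stdAddChar (k x : ZMod N) :
    cexp (-2 * Real.pi * I * (k.val : ℂ) * (x.val : ℂ) / (N : ℂ)) = stdAddChar (-(x * k)) := by
  have h : (-(x * k) : ZMod N) = ((-(k.val * x.val : ℕ) : ℤ) : ZMod N) := by
    push_cast [natCast_val, cast_id]
    ring
  rw [h, stdAddChar_coe]
  congr 1
  push_cast
  ring

end ZMod

open scoped ZMod

lemma Real.rpow_neg_half_sq_mul_self {x : ℝ} (hx : 0 < x) : (x ^ (-(1/2 : ℝ))) ^ 2 * x = 1 := by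
  rw [← Real.rpow_mul_natCast hx.le]
  norm_num [Real.rpow_neg_one, inv_mul_cancel₀ hx.ne']

section UnitaryDFT

variable (N : ℕ) [NeZero N]

lemma dft_eq_smul_dft (f : ZMod N → ℂ) :
    dft N f = (((N : ℝ) ^ (-(1/2 : ℝ)) : ℝ) : ℂ) • 𝓕 f := by
  ext k
  simp only [dft, ZMod.cexp_eq_stdAddChar, ZMod.dft_apply, Pi.smul_apply, smul_eq_mul,
    mul_comm (f _)]

lemma norm_dft_apply (f : ZMod N → ℂ) (k : ZMod N) :
    ‖dft N f k‖ = (N : ℝ) ^ (-(1/2 : ℝ)) * ‖𝓕 f k‖ := by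
  rw [dft_eq_smul_dft, Pi.smul_apply, norm_smul, norm_real, Real.norm_of_nonneg (by positivity)]

lemma sum_norm_dft_sq (f : ZMod N → ℂ) : ∑ k, ‖dft N f k‖ ^ 2 = ∑ x, ‖f x‖ ^ 2 := by
  simp only [norm_dft_apply, mul_pow, ← mul_sum, ZMod.sum_norm_dft_sq, ← mul_assoc,
    Real.rpow_neg_half_sq_mul_self (Nat.cast_pos.2 (NeZero.pos N)), one_mul]

lemma norm_dft_apply_le_l1norm (f : ZMod N → ℂ) (k : ZMod N) :
    ‖dft N f k‖ ≤ (N : ℝ) ^ (-(1/2 : ℝ)) * l1norm N f := by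
  rw [norm_dft_apply]
  exact mul_le_mul_of_nonneg_left (ZMod.norm_dft_apply_le f k) (by positivity)

end UnitaryDFT

section Norms

variable {N : ℕ} [NeZero N] {f : ZMod N → ℂ}

lemma l1norm_nonneg : 0 ≤ l1norm N f :=
  sum_nonneg fun x _ => norm_nonneg (f x)

lemma norm_le_linftyNorm (x : ZMod N) : ‖f x‖ ≤ linftyNorm N f :=
  le_ciSup (f := fun x => ‖f x‖) (Set.finite_range _).bddAbove x

lemma linftyNorm_le {a : ℝ} (h : ∀ x, ‖f x‖ ≤ a) : linftyNorm N f ≤ a :=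
  ciSup_le h

lemma linftyNorm_nonneg : 0 ≤ linftyNorm N f :=
  (norm_nonneg _).trans (norm_le_linftyNorm 0)

lemma sum_norm_sq_le_linftyNorm_mul_l1norm : ∑ x, ‖f x‖ ^ 2 ≤ linftyNorm N f * l1norm N f :=
  sum_sq_le_mul_sum_of_le (fun _ _ => norm_nonneg _) fun x _ => norm_le_linftyNorm x

lemma norm_eq_linftyNorm_of_sum_norm_sq_eq
    (h : ∑ x, ‖f x‖ ^ 2 = linftyNorm N f * l1norm N f) {x : ZMod N} (hx : x ∈ f.support) :
    ‖f x‖ = linftyNorm N f :=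
  eq_of_sum_sq_eq_mul_sum (fun _ _ => norm_nonneg _) (fun x _ => norm_le_linftyNorm x) h
    (mem_univ x) (norm_ne_zero_iff.2 hx)

lemma linftyNorm_le_one_of_partialIsometry (hpi : ∀ x, ‖f x‖ = 0 ∨ ‖f x‖ = 1) :
    linftyNorm N f ≤ 1 :=
  linftyNorm_le fun x => by rcases hpi x with h | h <;> simp [h]

lemma sum_norm_sq_eq_l1norm_of_partialIsometry (hpi : ∀ x, ‖f x‖ = 0 ∨ ‖f x‖ = 1) :
    ∑ x, ‖f x‖ ^ 2 = l1norm N f :=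
  sum_congr rfl fun x _ => by rcases hpi x with h | h <;> simp [h]

end Norms

theorem partial_isometry_extremal_fourier_general (N : ℕ) [NeZero N] (w : ZMod N → ℂ)
    (hpi : ∀ x : ZMod N, ‖w x‖ = 0 ∨ ‖w x‖ = 1)
    (hext : linftyNorm N w = (N : ℝ) ^ (-(1/2 : ℝ)) * l1norm N (dft N w)) :
    (∀ x ∈ Function.support (dft N w), ∀ y ∈ Function.support (dft N w),
        ‖dft N w x‖ = ‖dft N w y‖) ∧
      linftyNorm N (dft N w) = (N : ℝ) ^ (-(1/2 : ℝ)) * l1norm N w := by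
  set c : ℝ := (N : ℝ) ^ (-(1/2 : ℝ))
  have hsq : ∑ k, ‖dft N w k‖ ^ 2 = l1norm N w :=
    (sum_norm_dft_sq N w).trans (sum_norm_sq_eq_l1norm_of_partialIsometry hpi)
  have hM : linftyNorm N (dft N w) ≤ c * l1norm N w :=
    linftyNorm_le (norm_dft_apply_le_l1norm N w)
  have hm : c * l1norm N (dft N w) ≤ 1 := hext ▸ linftyNorm_le_one_of_partialIsometry hpi
  have hML : ∑ k, ‖dft N w k‖ ^ 2 = linftyNorm N (dft N w) * l1norm N (dft N w) := by
    refine le_antisymm sum_norm_sq_le_linftyNorm_mul_l1norm ?_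
    calc linftyNorm N (dft N w) * l1norm N (dft N w)
        ≤ c * l1norm N w * l1norm N (dft N w) := mul_le_mul_of_nonneg_right hM l1norm_nonneg
      _ = l1norm N w * (c * l1norm N (dft N w)) := by ring
      _ ≤ l1norm N w := mul_le_of_le_one_right l1norm_nonneg hm
      _ = _ := hsq.symm
  refine ⟨fun x hx y hy => ?_, le_antisymm hM ?_⟩
  · rw [norm_eq_linftyNorm_of_sum_norm_sq_eq hML hx,
      norm_eq_linftyNorm_of_sum_norm_sq_eq hML hy]
  · calc c * l1norm N w = c * (linftyNorm N (dft N w) * l1norm N (dft N w)) := by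
          rw [← hML, hsq]
      _ = linftyNorm N (dft N w) * (c * l1norm N (dft N w)) := by ring
      _ ≤ linftyNorm N (dft N w) := mul_le_of_le_one_right linftyNorm_nonneg hm

/-- If w is a partial isometry (|w| takes values in {0,1}) and the Fourier
transform of w is extremal, then w is an extremal bi-partial isometry. -/
theorem partial_isometry_extremal_fourier (N : ℕ) [NeZero N] (w : ZMod N → ℂ)
    (hw : w ≠ 0)
    (hpi : ∀ x : ZMod N, ‖w x‖ = 0 ∨ ‖w x‖ = 1)
    (hext : linftyNorm N w = (N : ℝ) ^ (-(1/2 : ℝ)) * l1norm N (dft N w)) :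
    (∀ x ∈ Function.support (dft N w), ∀ y ∈ Function.support (dft N w),
        ‖dft N w x‖ = ‖dft N w y‖) ∧
      linftyNorm N (dft N w) = (N : ℝ) ^ (-(1/2 : ℝ)) * l1norm N w :=
  partial_isometry_extremal_fourier_general N w hpi hext
end

section
/- Let N be a positive integer, H an additive subgroup of ZMod N, and f : ZMod N → ℂ such that supp f ⊆ H and supp 𝓕 f ⊆ H^⊥. Then there exists c ∈ ℂ with f = c · 1_H. (This is Lemma 3.15 of the paper, specialized to L^∞(ℤ/Nℤ), where the biprojection B is 1_H and the range projection of 𝓕(B) is 1_{H^⊥}.) -/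
open Complex Finset

lemma dft_term_eq (N : ℕ) [NeZero N] (k x : ZMod N) :
    Complex.exp (-2 * Real.pi * Complex.I * (k.val : ℂ) * (x.val : ℂ) / (N : ℂ))
      = ZMod.stdAddChar (-(x * k)) := by
  have h := ZMod.stdAddChar_coe (N := N) (-((k.val : ℤ) * (x.val : ℤ)))
  have hcast : ((-((k.val : ℤ) * (x.val : ℤ)) : ℤ) : ZMod N) = -(x * k) := by
    push_cast
    rw [ZMod.natCast_val, ZMod.natCast_val, ZMod.cast_id, ZMod.cast_id]
    ring
  rw [hcast] at h
  rw [h]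
  push_cast
  ring_nf

/-- If the support of f lies in a subgroup H and the support of its Fourier
transform lies in the annihilator of H, then f is a multiple of the
indicator function of H. -/
theorem support_in_subgroup_and_annihilator (N : ℕ) [NeZero N]
    (H : AddSubgroup (ZMod N)) (f : ZMod N → ℂ)
    (hsupp : Function.support f ⊆ (H : Set (ZMod N)))
    (hsuppF : Function.support (dft N f) ⊆
      {k : ZMod N | ∀ x ∈ H, k * x = 0}) :
    ∃ c : ℂ, f = fun x => c * Set.indicator (H : Set (ZMod N)) (fun _ => (1 : ℂ)) x := by
  classical
  have hNpos : (0:ℝ) < N := Nat.cast_pos.mpr (Nat.pos_of_ne_zero (NeZero.ne N))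
  have hc : (((N : ℝ) ^ (-(1/2 : ℝ)) : ℝ) : ℂ) ≠ 0 := by
    exact_mod_cast (Real.rpow_pos_of_pos hNpos _).ne'
  -- relate dft to ZMod.dft
  have hrel : ∀ k, ZMod.dft f k = (((N : ℝ) ^ (-(1/2 : ℝ)) : ℝ) : ℂ)⁻¹ * dft N f k := by
    intro k
    rw [ZMod.dft_apply, dft, ← mul_assoc, inv_mul_cancel₀ hc, one_mul]
    refine Finset.sum_congr rfl fun x _ => ?_
    rw [dft_term_eq, smul_eq_mul, mul_comm]
  have hS : Function.support (ZMod.dft f) ⊆ {k : ZMod N | ∀ x ∈ H, k * x = 0} := by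
    intro k hk
    apply hsuppF
    simp only [Function.mem_support] at hk ⊢
    intro h0
    exact hk (by rw [hrel, h0, mul_zero])
  refine ⟨(N : ℂ)⁻¹ * ∑ j, ZMod.dft f j, ?_⟩
  funext x
  by_cases hx : x ∈ H
  · have hinv : f x = ZMod.dft.symm (ZMod.dft f) x := by
      rw [LinearEquiv.symm_apply_apply]
    rw [hinv, ZMod.invDFT_apply]
    have hsum : ∑ j, ZMod.stdAddChar (j * x) • ZMod.dft f j = ∑ j, ZMod.dft f j := by
      refine Finset.sum_congr rfl fun j _ => ?_
      by_cases hj : ZMod.dft f j = 0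
      · rw [hj, smul_zero]
      · have : j * x = 0 := hS (Function.mem_support.mpr hj) x hx
        rw [this, AddChar.map_zero_eq_one, one_smul]
    rw [hsum, Set.indicator_of_mem hx, smul_eq_mul, mul_one]
  · have : f x = 0 := by
      by_contra h
      exact hx (hsupp (Function.mem_support.mpr h))
    rw [this, Set.indicator_of_notMem hx, mul_zero]
end

section
/- Let N be a positive integer, H an additive subgroup of ZMod N, a, b : ZMod N, and c ∈ ℂ nonzero. Let w : ZMod N → ℂ be given by w(x) = c · exp(2πi·b̄·x̄/N) for x ∈ a + H and w(x) = 0 otherwise. Suppose f : ZMod N → ℂ satisfies |f(x)| ≤ C·|w(x)| for all x and |(𝓕 f)(k)| ≤ C'·|(𝓕 w)(k)| for all k, for some constants C, C' > 0. Then there exists λ ∈ ℂ with f = λ · w. (This is Hardy's uncertainty principle, Theorem 3.16 of the paper — if w is a bi-shift of a biprojection, |x| ≤ C|w| and |𝓕(x)| ≤ C'|𝓕(w)| imply x is a scalar multiple of w — specialized to L^∞(ℤ/Nℤ).) -/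
open Complex Finset

/-!
Let `ψ` be the standard character of `ZMod N` and `H^⊥ = {t | ∀ h ∈ H, ψ (h * t) = 1}`.
Every `g` vanishing off the coset `a + H` satisfies `𝓕 g (b + t) = ψ (-(a * t)) * 𝓕 g b` for
`t ∈ H^⊥`; this applies to `w` and, by `|f| ≤ C |w|`, to `f`. Translating `w` by `h ∈ H`
multiplies it by `ψ (h * b)`, which forces `𝓕 w` to vanish off `b + H^⊥`, and then so does `𝓕 f`
by `|𝓕 f| ≤ C' |𝓕 w|`. Hence `𝓕 f` and `𝓕 w` are proportional (`𝓕 w b ≠ 0` as `w ≠ 0`), and so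
are `f` and `w` by Fourier inversion.
-/

open scoped ZMod

namespace ZMod

variable {N : ℕ} [NeZero N]

lemma stdAddChar_mul_eq_exp (u v : ZMod N) :
    stdAddChar (u * v) = exp (2 * Real.pi * I * (u.val : ℂ) * (v.val : ℂ) / N) := by
  rw [stdAddChar_apply, ← natCast_zmod_val u, ← natCast_zmod_val v, ← Nat.cast_mul,
    toCircle_natCast, natCast_zmod_val, natCast_zmod_val]
  push_cast
  ring_nf

variable {E : Type*} [AddCommGroup E] [Module ℂ E]

lemma dft_comp_add_right (Φ : ZMod N → E) (h k : ZMod N) :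
    𝓕 (fun j ↦ Φ (j + h)) k = stdAddChar (h * k) • 𝓕 Φ k := by
  simp only [dft_apply, smul_sum, smul_smul]
  refine Fintype.sum_equiv (Equiv.addRight h) _ _ fun j ↦ ?_
  rw [Equiv.coe_addRight, ← AddChar.map_add_eq_mul]
  congr 2
  ring

lemma dft_eq_zero_of_comp_add_eq_smul {Φ : ZMod N → E} {h b k : ZMod N}
    (hΦ : ∀ j, Φ (j + h) = stdAddChar (h * b) • Φ j) (hk : stdAddChar (h * (k - b)) ≠ 1) :
    𝓕 Φ k = 0 := by
  have hshift := dft_comp_add_right Φ h k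
  simp only [hΦ, ← Pi.smul_def, dft_const_smul, Pi.smul_apply] at hshift
  have hne : stdAddChar (h * b) ≠ 0 := Circle.coe_ne_zero _
  rw [mul_sub, AddChar.map_sub_eq_div, Ne, div_eq_one_iff_eq hne] at hk
  have : (stdAddChar (h * k) - stdAddChar (h * b)) • 𝓕 Φ k = 0 := by
    rw [sub_smul, hshift, sub_self]
  exact (smul_eq_zero.mp this).resolve_left (sub_ne_zero.mpr hk)

lemma dft_add_of_support_subset_coset {H : AddSubgroup (ZMod N)} {a t : ZMod N}
    {Φ : ZMod N → E} (hΦ : ∀ j, j - a ∉ H → Φ j = 0) (ht : ∀ h ∈ H, stdAddChar (h * t) = 1)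
    (k : ZMod N) : 𝓕 Φ (k + t) = stdAddChar (-(a * t)) • 𝓕 Φ k := by
  simp only [dft_apply, smul_sum, smul_smul]
  refine sum_congr rfl fun j _ ↦ ?_
  by_cases hj : j - a ∈ H
  · rw [← AddChar.map_add_eq_mul, ← mul_one (stdAddChar (-(j * (k + t)))), ← ht _ hj,
      ← AddChar.map_add_eq_mul]
    congr 2
    ring
  · simp [hΦ j hj]

lemma apply_add_eq_smul_of_coset {H : AddSubgroup (ZMod N)} {a b : ZMod N} {c : ℂ}
    {w : ZMod N → ℂ} (hw_mem : ∀ x, x - a ∈ H → w x = c * stdAddChar (b * x))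
    (hw0 : ∀ x, x - a ∉ H → w x = 0) {h : ZMod N} (hh : h ∈ H) (x : ZMod N) :
    w (x + h) = stdAddChar (h * b) • w x := by
  by_cases hx : x - a ∈ H
  · rw [hw_mem x hx, hw_mem (x + h) (by simpa [add_sub_right_comm] using H.add_mem hx hh),
      smul_eq_mul, mul_add, AddChar.map_add_eq_mul, mul_comm h]
    ring
  · have hxh : x + h - a ∉ H := fun hxh ↦
      hx (by simpa [add_sub_right_comm] using H.sub_mem hxh hh)
    rw [hw0 x hx, hw0 _ hxh, smul_zero]

lemma exists_eq_smul_of_supported_on_coset {H : AddSubgroup (ZMod N)} {a b : ZMod N}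
    {w f : ZMod N → ℂ} (hw0 : ∀ x, x - a ∉ H → w x = 0)
    (hw_shift : ∀ h ∈ H, ∀ x, w (x + h) = stdAddChar (h * b) • w x) (hw : w ≠ 0)
    (hf0 : ∀ x, x - a ∉ H → f x = 0) (hfF : ∀ k, 𝓕 w k = 0 → 𝓕 f k = 0) :
    ∃ l : ℂ, f = l • w := by
  have hon : ∀ k, (∀ h ∈ H, stdAddChar (h * (k - b)) = 1) → ∀ g : ZMod N → ℂ,
      (∀ x, x - a ∉ H → g x = 0) → 𝓕 g k = stdAddChar (-(a * (k - b))) * 𝓕 g b := by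
    intro k hk g hg
    simpa using dft_add_of_support_subset_coset hg hk b
  have hoff : ∀ k, ¬ (∀ h ∈ H, stdAddChar (h * (k - b)) = 1) → 𝓕 w k = 0 := by
    intro k hk
    push Not at hk
    obtain ⟨h, hh, hk⟩ := hk
    exact dft_eq_zero_of_comp_add_eq_smul (hw_shift h hh) hk
  have hwb : 𝓕 w b ≠ 0 := by
    refine fun hwb ↦ hw (dft.injective (funext fun k ↦ ?_))
    by_cases hk : ∀ h ∈ H, stdAddChar (h * (k - b)) = 1
    · simp [hon k hk w hw0, hwb]
    · simp [hoff k hk]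
  refine ⟨𝓕 f b / 𝓕 w b, dft.injective (funext fun k ↦ ?_)⟩
  rw [dft_const_smul, Pi.smul_apply, smul_eq_mul]
  by_cases hk : ∀ h ∈ H, stdAddChar (h * (k - b)) = 1
  · rw [hon k hk f hf0, hon k hk w hw0]
    field_simp
  · rw [hoff k hk, hfF k (hoff k hk), mul_zero]

end ZMod

lemma dft_eq_rpow_mul_zmod_dft (N : ℕ) [NeZero N] (f : ZMod N → ℂ) (k : ZMod N) :
    dft N f k = (((N : ℝ) ^ (-(1/2 : ℝ)) : ℝ) : ℂ) * 𝓕 f k := by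
  rw [dft, ZMod.dft_apply]
  congr 1
  refine sum_congr rfl fun x _ ↦ ?_
  rw [smul_eq_mul, mul_comm, AddChar.map_neg_eq_inv, ZMod.stdAddChar_mul_eq_exp, ← exp_neg]
  congr 2
  ring

theorem hardy_uncertainty_general (N : ℕ) [NeZero N] (H : AddSubgroup (ZMod N))
    (a b : ZMod N) (c : ℂ) (hc : c ≠ 0) (w f : ZMod N → ℂ)
    (hw : ∀ x : ZMod N,
      (x - a ∈ H →
        w x = c * Complex.exp
          (2 * Real.pi * Complex.I * (b.val : ℂ) * (x.val : ℂ) / (N : ℂ))) ∧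
      (x - a ∉ H → w x = 0))
    (C C' : ℝ)
    (hf : ∀ x : ZMod N, ‖f x‖ ≤ C * ‖w x‖)
    (hfF : ∀ k : ZMod N, ‖dft N f k‖ ≤ C' * ‖dft N w k‖) :
    ∃ l : ℂ, f = fun x => l * w x := by
  have hw_mem (x : ZMod N) (hx : x - a ∈ H) : w x = c * ZMod.stdAddChar (b * x) := by
    rw [(hw x).1 hx, ZMod.stdAddChar_mul_eq_exp]
  have hw0 (x : ZMod N) : x - a ∉ H → w x = 0 := (hw x).2
  have hw_ne : w ≠ 0 := fun h0 ↦ mul_ne_zero hc (Circle.coe_ne_zero _) <|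
    (hw_mem a (by simp)).symm.trans (congrFun h0 a)
  have hf0 (x : ZMod N) (hx : x - a ∉ H) : f x = 0 :=
    norm_le_zero_iff.mp (by simpa [hw0 x hx] using hf x)
  have hfF_zero (k : ZMod N) (hk : 𝓕 w k = 0) : 𝓕 f k = 0 := by
    have hN : 0 < (N : ℝ) ^ (-(1/2 : ℝ)) :=
      Real.rpow_pos_of_pos (Nat.cast_pos.mpr (NeZero.pos N)) _
    have := hfF k
    rw [dft_eq_rpow_mul_zmod_dft, dft_eq_rpow_mul_zmod_dft, hk, mul_zero, norm_zero,
      mul_zero, norm_mul, norm_real, Real.norm_of_nonneg hN.le] at this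
    exact norm_le_zero_iff.mp (nonpos_of_mul_nonpos_right this hN)
  exact ZMod.exists_eq_smul_of_supported_on_coset hw0
    (fun _ hh ↦ ZMod.apply_add_eq_smul_of_coset hw_mem hw0 hh) hw_ne hf0 hfF_zero

/-- Hardy's uncertainty principle on ZMod N: if w is a bi-shift of a
biprojection (a nonzero multiple of a modulated translate of a subgroup
indicator function), |f| ≤ C |w| and |𝓕 f| ≤ C′ |𝓕 w|, then f is a scalar
multiple of w. -/
theorem hardy_uncertainty (N : ℕ) [NeZero N] (H : AddSubgroup (ZMod N))
    (a b : ZMod N) (c : ℂ) (hc : c ≠ 0) (w f : ZMod N → ℂ)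
    (hw : ∀ x : ZMod N,
      (x - a ∈ H →
        w x = c * Complex.exp
          (2 * Real.pi * Complex.I * (b.val : ℂ) * (x.val : ℂ) / (N : ℂ))) ∧
      (x - a ∉ H → w x = 0))
    (C C' : ℝ) (hC : 0 < C) (hC' : 0 < C')
    (hf : ∀ x : ZMod N, ‖f x‖ ≤ C * ‖w x‖)
    (hfF : ∀ k : ZMod N, ‖dft N f k‖ ≤ C' * ‖dft N w k‖) :
    ∃ l : ℂ, f = fun x => l * w x :=
  hardy_uncertainty_general N H a b c hc w f hw C C' hf hfF
end
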